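/- Let M = (E, 𝓘) be a matroid and let I_1, …, I_τ be a nested system of spanning sets (NSS) of M. For an arbitrary independent set S of M, define I_j' = I_j \ S for all j ∈ {1,…,τ}. Then the sequence I_1', …, I_τ' is an NSS of the contraction minor M/S. -/

import Mathlib

open Finset

noncomputable section

variable {E : Type*} [Fintype E] [DecidableEq E]

/-- Probability that an independent-inclusion random subset of `E`, in which each element `e`
is included independently with probability `π e`, is exactly the set `A`. -/
def prodWeight (π : E → ℝ) (A : Finset E) : ℝ :=
  (∏ e ∈ A, π e) * ∏ e ∈ Aᶜ, (1 - π e)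

/-- Expectation of `g` under the independent-inclusion random subset with marginals `π`. -/
def expec (π : E → ℝ) (g : Finset E → ℝ) : ℝ :=
  ∑ A : Finset E, prodWeight π A * g A

/-- Total (additive) weight of a finite set. -/
def setWeight (w : E → ℝ) (T : Finset E) : ℝ := ∑ e ∈ T, w e

/-- Value of a best feasible (w.r.t. `𝓘`) subset of `S`, for the objective `f`. -/
def bestVal (𝓘 : Set (Finset E)) (f : Finset E → ℝ) (S : Finset E) : ℝ :=
  sSup (f '' {T | T ⊆ S ∧ T ∈ 𝓘})

/-- A (finite) matroid on the ground set `E`, given by its independent sets. -/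
structure FinMatroid (E : Type*) [Fintype E] [DecidableEq E] where
  Indep : Finset E → Prop
  empty_indep : Indep ∅
  indep_subset : ∀ ⦃S T : Finset E⦄, Indep T → S ⊆ T → Indep S
  indep_exchange : ∀ ⦃S T : Finset E⦄, Indep S → Indep T → S.card < T.card →
    ∃ e ∈ T, e ∉ S ∧ Indep (insert e S)

/-- The rank function of a matroid: the maximum cardinality of an independent subset of `S`. -/
def FinMatroid.rank (M : FinMatroid E) (S : Finset E) : ℕ :=
  sSup {n | ∃ T ⊆ S, M.Indep T ∧ T.card = n}

/-- `I_1 ∪ ⋯ ∪ I_j` (sets are indexed starting from `1`). -/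
def prefixUnion (I : ℕ → Finset E) (j : ℕ) : Finset E :=
  (Finset.Icc 1 j).biUnion I

/-- A nested system of spanning sets for the set system on ground set `G` with rank
function `rk`: each `I_j` lies outside `I_{1:j-1}` and is spanning (full rank) in the
deletion minor obtained by removing `I_{1:j-1}` from `G`. -/
def IsNSS (rk : Finset E → ℕ) (G : Finset E) (τ : ℕ) (I : ℕ → Finset E) : Prop :=
  ∀ j ∈ Finset.Icc 1 τ,
    I j ⊆ G \ prefixUnion I (j - 1) ∧ rk (I j) = rk (G \ prefixUnion I (j - 1))

/-- `I` is a maximum-`w`-weight independent set of the restriction of `M` to `G`. -/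
def IsMaxWeightIndep (M : FinMatroid E) (w : E → ℝ) (G : Finset E) (I : Finset E) : Prop :=
  I ⊆ G ∧ M.Indep I ∧ ∀ J ⊆ G, M.Indep J → setWeight w J ≤ setWeight w I

/-- `I` is a maximum-`w`-weight base of the restriction (deletion minor) of `M` to `G`. -/
def IsMaxWeightBase (M : FinMatroid E) (w : E → ℝ) (G : Finset E) (I : Finset E) : Prop :=
  I ⊆ G ∧ M.Indep I ∧ M.rank I = M.rank G ∧
    ∀ J ⊆ G, M.Indep J → M.rank J = M.rank G → setWeight w J ≤ setWeight w I

namespace FinMatroid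

variable (M : FinMatroid E)

lemma card_le_rank {X T : Finset E} (hTX : T ⊆ X) (hT : M.Indep T) : T.card ≤ M.rank X :=
  le_csSup ⟨X.card, fun _ ⟨_, hT', _, hc⟩ => hc ▸ card_le_card hT'⟩ ⟨T, hTX, hT, rfl⟩

lemma exists_indep_card_eq_rank (X : Finset E) : ∃ T ⊆ X, M.Indep T ∧ T.card = M.rank X :=
  Nat.sSup_mem (s := {n | ∃ T ⊆ X, M.Indep T ∧ T.card = n})
    ⟨0, ∅, empty_subset X, M.empty_indep, card_empty⟩
    ⟨X.card, fun _ ⟨_, hT, _, hc⟩ => hc ▸ card_le_card hT⟩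

def toMatroid : Matroid E :=
  (IndepMatroid.ofFinset Set.univ M.Indep M.empty_indep M.indep_subset M.indep_exchange
    fun _ _ => Set.subset_univ _).matroid

@[simp]
lemma toMatroid_indep_coe {T : Finset E} : M.toMatroid.Indep T ↔ M.Indep T := by
  simp [toMatroid]

lemma eRk_toMatroid (X : Finset E) : M.toMatroid.eRk X = M.rank X := by
  refine le_antisymm (Matroid.eRk_le_iff.2 fun T hTX hT => ?_) ?_
  · lift T to Finset E using X.finite_toSet.subset hTX
    rw [Set.encard_coe_eq_coe_finsetCard, Nat.cast_le]
    exact M.card_le_rank (coe_subset.1 hTX) (M.toMatroid_indep_coe.1 hT)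
  · obtain ⟨T, hTX, hT, hcard⟩ := M.exists_indep_card_eq_rank X
    rw [← hcard, ← Set.encard_coe_eq_coe_finsetCard]
    exact (M.toMatroid_indep_coe.2 hT).encard_le_eRk_of_subset (coe_subset.2 hTX)

/-- `B` lies in the closure of `A`, hence `B ∪ C` in that of `A ∪ C`. -/
lemma rank_union_congr {A B : Finset E} (hAB : A ⊆ B) (h : M.rank A = M.rank B)
    (C : Finset E) : M.rank (A ∪ C) = M.rank (B ∪ C) := by
  have hcl : M.toMatroid.closure A = M.toMatroid.closure B :=
    (M.toMatroid.isRkFinite_of_finite A.finite_toSet).closure_eq_closure_of_subset_of_eRk_ge_eRk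
      (coe_subset.2 hAB) (by rw [eRk_toMatroid, eRk_toMatroid, h])
  have hrk : M.toMatroid.eRk ↑(A ∪ C) = M.toMatroid.eRk ↑(B ∪ C) := by
    rw [coe_union, coe_union, ← Matroid.eRk_closure_eq, Matroid.closure_union_congr_left hcl,
      Matroid.eRk_closure_eq]
  rwa [eRk_toMatroid, eRk_toMatroid, Nat.cast_inj] at hrk

end FinMatroid

lemma prefixUnion_sdiff {α : Type*} [DecidableEq α] (I : ℕ → Finset α) (S : Finset α)
    (j : ℕ) :
    prefixUnion (fun k => I k \ S) j = prefixUnion I j \ S := by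
  ext x
  simp only [prefixUnion, mem_biUnion, mem_sdiff]
  tauto

theorem stmt_5_general (M : FinMatroid E) (τ : ℕ) (I : ℕ → Finset E)
    (hNSS : IsNSS M.rank Finset.univ τ I)
    (S : Finset E) :
    IsNSS (fun T => M.rank (T ∪ S) - S.card) (Finset.univ \ S) τ (fun j => I j \ S) := by
  intro j hj
  obtain ⟨hsub, hrk⟩ := hNSS j hj
  have hground (P : Finset E) : (univ \ S) \ (P \ S) = (univ \ P) \ S := by
    ext x
    simp only [mem_sdiff, mem_univ, true_and]
    tauto
  simp only [prefixUnion_sdiff, hground, sdiff_union_self_eq_union]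
  exact ⟨sdiff_subset_sdiff hsub subset_rfl, by rw [M.rank_union_congr hsub hrk S]⟩

/-- Nested systems of spanning sets are preserved under contraction:
if `I_1, …, I_τ` is an NSS of the matroid `M` and `S` is an independent set of `M`,
then `I_1 ∖ S, …, I_τ ∖ S` is an NSS of the contraction `M/S` (whose ground set is
`E ∖ S` and whose rank function is `T ↦ Rank^M(T ∪ S) − |S|`). -/
theorem stmt_5 (M : FinMatroid E) (τ : ℕ) (I : ℕ → Finset E)
    (hNSS : IsNSS M.rank Finset.univ τ I)
    (S : Finset E) (hS : M.Indep S) :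
    IsNSS (fun T => M.rank (T ∪ S) - S.card) (Finset.univ \ S) τ (fun j => I j \ S) :=
  stmt_5_general M τ I hNSS S
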